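/- arXiv:2509.03023 — 2 statements merged into one kernel-verified Lean document; each statement's English description precedes it below -/
import Mathlib

section
/- Let (X,κ) be a finite digital image. If X is 2-reducible, then there exists a point p ∈ X such that X ∖ {p}, with the induced adjacency, is 2-homotopy equivalent to X. -/
/-- Points of the digital plane. -/
abbrev Pt : Type := ℤ × ℤ

/-- `c_i`-adjacency on `ℤ²` (for `i = 1` or `i = 2`). -/
def cAdj (i : ℕ) (x y : Pt) : Prop :=
  if i = 1 then |x.1 - y.1| + |x.2 - y.2| ≤ 1
  else |x.1 - y.1| ≤ 1 ∧ |x.2 - y.2| ≤ 1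

/-- The adjacency induced on a subset of `ℤ²`. -/
def subAdj (i : ℕ) (X : Set Pt) (x y : X) : Prop := cAdj i x.1 y.1

/-- Digital continuity of a map between digital images. -/
def DigCont {α β : Type} (κ : α → α → Prop) (δ : β → β → Prop) (f : α → β) : Prop :=
  ∀ x y, κ x y → δ (f x) (f y)

/-- The standard (`c_1`) adjacency on `ℕ`, used for digital intervals. -/
def natAdj (s t : ℕ) : Prop := s = t ∨ s + 1 = t ∨ t + 1 = s

/-- The two normal product adjacencies on `α × ℕ`. -/
def prodAdj (i : ℕ) {α : Type} (κ : α → α → Prop) (p q : α × ℕ) : Prop :=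
  if i = 1 then (κ p.1 q.1 ∧ p.2 = q.2) ∨ (p.1 = q.1 ∧ natAdj p.2 q.2)
  else κ p.1 q.1 ∧ natAdj p.2 q.2

/-- `f` and `g` are `i`-homotopic: there is a continuous
`H : X ×_i [0,m]_ℤ → Y` with `H(·,0) = f` and `H(·,m) = g`. -/
def Homotopic (i : ℕ) {α β : Type} (κ : α → α → Prop) (δ : β → β → Prop)
    (f g : α → β) : Prop :=
  ∃ (m : ℕ) (H : α → ℕ → β),
    (∀ x, H x 0 = f x) ∧ (∀ x, H x m = g x) ∧
    (∀ x y s t, s ≤ m → t ≤ m → prodAdj i κ (x, s) (y, t) → δ (H x s) (H y t))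

/-- `i`-homotopy equivalence of digital images. -/
def HtpyEquiv (i : ℕ) {α β : Type} (κ : α → α → Prop) (δ : β → β → Prop) : Prop :=
  ∃ (f : α → β) (g : β → α),
    DigCont κ δ f ∧ DigCont δ κ g ∧
    Homotopic i κ κ (g ∘ f) id ∧ Homotopic i δ δ (f ∘ g) id

/-- Homotopy equivalence of digital pictures `(X, c_i, c_j)` and `(Y, c_i, c_j)`. -/
def PicHtpyEquiv (i j : ℕ) (X Y : Set Pt) : Prop :=
  HtpyEquiv i (subAdj i X) (subAdj i Y) ∧ HtpyEquiv j (subAdj j Xᶜ) (subAdj j Yᶜ)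

/-- Isomorphism of digital images: a continuous bijection with continuous inverse. -/
def DigIso {α β : Type} (κ : α → α → Prop) (δ : β → β → Prop) : Prop :=
  ∃ e : α ≃ β, DigCont κ δ ⇑e ∧ DigCont δ κ ⇑e.symm

/-- Isomorphism of digital pictures. -/
def PicIso (i j : ℕ) (X Y : Set Pt) : Prop :=
  DigIso (subAdj i X) (subAdj i Y) ∧ DigIso (subAdj j Xᶜ) (subAdj j Yᶜ)

/-- `x` and `y` are joined by a `c_i`-path inside `A`. -/
def ChainIn (i : ℕ) (A : Set Pt) (x y : Pt) : Prop :=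
  ∃ (n : ℕ) (c : ℕ → Pt), c 0 = x ∧ c n = y ∧ (∀ k ≤ n, c k ∈ A) ∧
    ∀ k < n, cAdj i (c k) (c (k + 1))

/-- `A` is `c_i`-connected. -/
def Conn (i : ℕ) (A : Set Pt) : Prop := ∀ x ∈ A, ∀ y ∈ A, ChainIn i A x y

/-- The `c_i`-component of `p` in `A`. -/
def compOf (i : ℕ) (A : Set Pt) (p : Pt) : Set Pt := {y | ChainIn i A p y}

/-- The digital picture `(X, c_i, c_j)` has no hole: every `c_j`-component
of the complement of `X` is infinite. -/
def NoHole (j : ℕ) (X : Set Pt) : Prop := ∀ p ∈ Xᶜ, (compOf j Xᶜ p).Infinite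

/-- The row of `X` at height `k`. -/
def rowOf (X : Set Pt) (k : ℤ) : Set Pt := X ∩ {p | p.2 = k}

/-- `r` is a row component of `(X, c_i)`: a `c_i`-component of a row of `X`. -/
def IsRowComp (i : ℕ) (X : Set Pt) (r : Set Pt) : Prop :=
  ∃ (k : ℤ) (p : Pt), p ∈ rowOf X k ∧ r = compOf i (rowOf X k) p

/-- Two subsets of `ℤ²` are `c_i`-adjacent. -/
def setAdj (i : ℕ) (A B : Set Pt) : Prop := ∃ a ∈ A, ∃ b ∈ B, cAdj i a b

/-- The edge relation of the row component graph `R(X, c_i)`: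
two distinct row components joined when they are `c_i`-adjacent. -/
def rcgAdj (i : ℕ) (X : Set Pt) (r s : Set Pt) : Prop :=
  IsRowComp i X r ∧ IsRowComp i X s ∧ r ≠ s ∧ setAdj i r s

/-- The row component graph `R(X, c_i)` is acyclic: there is no cycle of
`k ≥ 3` distinct row components with consecutive ones adjacent. -/
def RCGAcyclic (i : ℕ) (X : Set Pt) : Prop :=
  ¬ ∃ (k : ℕ) (r : ℕ → Set Pt), 3 ≤ k ∧
    (∀ t < k, IsRowComp i X (r t)) ∧
    (∀ t < k, ∀ t' < k, r t = r t' → t = t') ∧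
    (∀ t, t + 1 < k → rcgAdj i X (r t) (r (t + 1))) ∧
    rcgAdj i X (r (k - 1)) (r 0)

/-- The row component graph `R(X, c_i)` is connected. -/
def RCGConnected (i : ℕ) (X : Set Pt) : Prop :=
  ∀ r s : Set Pt, IsRowComp i X r → IsRowComp i X s →
    Relation.ReflTransGen (rcgAdj i X) r s

/-- A digital image is `i`-contractible: the identity is `i`-homotopic to a constant map. -/
def Contractible (i : ℕ) {α : Type} (κ : α → α → Prop) : Prop :=
  ∃ x₀ : α, Homotopic i κ κ id (fun _ => x₀)

/-- Row-convexity. -/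
def RowConvex (X : Set Pt) : Prop :=
  ∀ a b c k : ℤ, (a, k) ∈ X → (c, k) ∈ X → a ≤ b → b ≤ c → (b, k) ∈ X

/-- Column-convexity. -/
def ColConvex (X : Set Pt) : Prop :=
  ∀ a b c k : ℤ, (k, a) ∈ X → (k, c) ∈ X → a ≤ b → b ≤ c → (k, b) ∈ X

/-- The row-convex hull of `X`. -/
def Hr (X : Set Pt) : Set Pt := ⋂₀ {S | RowConvex S ∧ X ⊆ S}

/-- The column-convex hull of `X`. -/
def Hc (X : Set Pt) : Set Pt := ⋂₀ {S | ColConvex S ∧ X ⊆ S}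

/-- The rc-convex hull of `X`. -/
def Hrc (X : Set Pt) : Set Pt := ⋂₀ {S | (RowConvex S ∧ ColConvex S) ∧ X ⊆ S}

/-- A loop of length `m` inside `Z`: a continuous `γ : [0,m]_ℤ → Z` with `γ 0 = γ m`. -/
def LoopIn (j : ℕ) (Z : Set Pt) (m : ℕ) (γ : ℕ → Pt) : Prop :=
  γ 0 = γ m ∧ (∀ t ≤ m, γ t ∈ Z) ∧ ∀ t < m, cAdj j (γ t) (γ (t + 1))

/-- The loop `γ` is `j`-contractible in `Z`: there is a `j`-homotopy in `Z` from `γ`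
to the constant loop at `γ 0` whose every stage is a loop based at `γ 0`. -/
def LoopContractibleIn (j : ℕ) (Z : Set Pt) (m : ℕ) (γ : ℕ → Pt) : Prop :=
  ∃ (K : ℕ) (H : ℕ → ℕ → Pt),
    (∀ t, H t 0 = γ t) ∧ (∀ t, H t K = γ 0) ∧
    (∀ k ≤ K, H 0 k = γ 0 ∧ H m k = γ 0) ∧
    (∀ t ≤ m, ∀ k ≤ K, H t k ∈ Z) ∧
    (∀ s t k l, s ≤ m → t ≤ m → k ≤ K → l ≤ K →
      prodAdj j natAdj (s, k) (t, l) → cAdj j (H s k) (H t l))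

/-- The union of the infinite `c_j`-components of the complement of `X`. -/
def InfPart (j : ℕ) (X : Set Pt) : Set Pt := {p | p ∈ Xᶜ ∧ (compOf j Xᶜ p).Infinite}

/-- The outer perimeter of the digital picture `(X, c_i, c_j)`: the least length of a
non-`j`-contractible loop in the infinite component of the complement of `X`, or `1`
if no such loop exists.  (It depends only on `j` and `X`.) -/
noncomputable def outerPerim (j : ℕ) (X : Set Pt) : ℕ := by
  classical
  exact if (∃ m γ, LoopIn j (InfPart j X) m γ ∧ ¬ LoopContractibleIn j (InfPart j X) m γ)
    then sInf {m | ∃ γ, LoopIn j (InfPart j X) m γ ∧ ¬ LoopContractibleIn j (InfPart j X) m γ}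
    else 1

/-- The digital rectangle `I_{n,m} = [1,n]_ℤ × [1,m]_ℤ`. -/
def Irect (n m : ℤ) : Set Pt := Set.Icc 1 n ×ˢ Set.Icc 1 m

/-- A finite digital image is `i`-reducible when it is `i`-homotopy equivalent to a
digital image with strictly fewer points. -/
def Reducible (i : ℕ) {α : Type} (κ : α → α → Prop) : Prop :=
  ∃ (β : Type) (δ : β → β → Prop), Reflexive δ ∧ Symmetric δ ∧ Finite β ∧
    Nat.card β < Nat.card α ∧ HtpyEquiv i κ δ

private lemma iter_cont {α : Type} (κ : α → α → Prop) (u : α → α)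
    (hu : DigCont κ κ u) : ∀ n, DigCont κ κ (u^[n]) := by
  intro n
  induction n with
  | zero => intro x y hxy; simpa using hxy
  | succ n ih =>
      intro x y hxy
      rw [Function.iterate_succ']
      exact hu _ _ (ih x y hxy)

/-- if a finite digital image is 2-reducible, then some one-point
deletion `X ∖ {p}` is 2-homotopy equivalent to `X`. -/
theorem stmt18 {α : Type} [Finite α] (κ : α → α → Prop)
    (hrefl : Reflexive κ) (hsymm : Symmetric κ)
    (h : Reducible 2 κ) :
    ∃ p : α, HtpyEquiv 2 (fun a b : ({p}ᶜ : Set α) => κ a.1 b.1) κ := by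
  classical
  obtain ⟨β, δ, _hr, _hs, hfin, hcard, f, g, hf, hg, hgf, _hfg⟩ := h
  -- g ∘ f is not surjective
  have hns : ¬ Function.Surjective (g ∘ f) := by
    intro hs
    have hgs : Function.Surjective g := hs.of_comp
    have := Nat.card_le_card_of_surjective g hgs
    omega
  obtain ⟨m, H, H0, Hm, hadj⟩ := hgf
  have stage_cont : ∀ t ≤ m, DigCont κ κ (fun x => H x t) := by
    intro t ht x y hxy
    exact hadj x y t t ht ht (by simp [prodAdj, natAdj, hxy])
  have hPm : Function.Surjective (fun x => H x m) := by
    intro x; exact ⟨x, Hm x⟩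
  have hP0 : ¬ Function.Surjective (fun x => H x 0) := by
    intro hs; apply hns
    intro x; obtain ⟨y, hy⟩ := hs x
    refine ⟨y, ?_⟩
    rw [← H0 y]; exact hy
  have hex : ∃ t, Function.Surjective (fun x => H x t) := ⟨m, hPm⟩
  set k := Nat.find hex with hkdef
  have hk : Function.Surjective (fun x => H x k) := Nat.find_spec hex
  have hkm : k ≤ m := Nat.find_le hPm
  have hk0 : k ≠ 0 := by
    intro h0; exact hP0 (h0 ▸ hk)
  have hk1 : ¬ Function.Surjective (fun x => H x (k - 1)) :=
    Nat.find_min hex (by omega)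
  set u : α → α := fun x => H x k with hudef
  set v : α → α := fun x => H x (k - 1) with hvdef
  have step : ∀ x y, κ x y → κ (u x) (v y) := by
    intro x y hxy
    exact hadj x y k (k - 1) hkm (by omega)
      (by simp [prodAdj, natAdj, hxy]; omega)
  have step' : ∀ x y, κ x y → κ (v x) (u y) := by
    intro x y hxy
    exact hadj x y (k - 1) k (by omega) hkm
      (by simp [prodAdj, natAdj, hxy]; omega)
  have hucont : DigCont κ κ u := stage_cont k hkm
  have hvcont : DigCont κ κ v := stage_cont (k - 1) (by omega)
  have hubij : Function.Bijective u := Finite.surjective_iff_bijective.mp hk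
  set σ : Equiv.Perm α := Equiv.ofBijective u hubij with hσdef
  set N := orderOf σ with hNdef
  have hN1 : σ ^ N = 1 := pow_orderOf_eq_one σ
  have hNpos : 0 < N := by
    haveI hne : Nonempty α := Nat.card_pos_iff.mp (by omega) |>.1
    exact orderOf_pos σ
  have hinv : σ⁻¹ = σ ^ (N - 1) := by
    have : σ ^ (N - 1) * σ = 1 := by
      rw [← pow_succ]
      have : N - 1 + 1 = N := by omega
      rw [this, hN1]
    exact (eq_inv_of_mul_eq_one_left this).symm
  have hsymm_eq : ∀ x, σ.symm x = u^[N - 1] x := by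
    intro x
    have h1 : σ.symm x = σ⁻¹ x := rfl
    rw [h1, hinv]
    have : ⇑(σ ^ (N - 1)) = (⇑σ)^[N - 1] := Equiv.Perm.coe_pow σ (N - 1)
    rw [this]
    rfl
  have hinvcont : DigCont κ κ (⇑σ.symm) := by
    intro x y hxy
    rw [hsymm_eq x, hsymm_eq y]
    exact iter_cont κ u hucont (N - 1) x y hxy
  set w : α → α := fun x => v (σ.symm x) with hwdef
  have hwcont : DigCont κ κ w := fun x y hxy => hvcont _ _ (hinvcont x y hxy)
  have hw1 : ∀ x y, κ x y → κ x (w y) := by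
    intro x y hxy
    have h1 := step _ _ (hinvcont x y hxy)
    have h2 : u (σ.symm x) = x := σ.apply_symm_apply x
    rwa [h2] at h1
  have hw2 : ∀ x y, κ x y → κ (w x) y := by
    intro x y hxy
    have h1 := step' _ _ (hinvcont x y hxy)
    have h2 : u (σ.symm y) = y := σ.apply_symm_apply y
    rwa [h2] at h1
  -- find a point missed by w
  have : ¬ Function.Surjective w := by
    intro hs
    apply hk1
    intro x
    obtain ⟨y, hy⟩ := hs x
    exact ⟨σ.symm y, hy⟩
  rw [Function.Surjective] at this
  push_neg at this
  obtain ⟨p, hp⟩ := this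
  refine ⟨p, Subtype.val, fun x => ⟨w x, by simpa using hp x⟩, ?_, ?_, ?_, ?_⟩
  · intro a b hab; exact hab
  · intro x y hxy; exact hwcont x y hxy
  · -- homotopy on the subtype from (g∘f)-like map to id, one step
    refine ⟨1, fun a t => if t = 0 then ⟨w a.1, by simpa using hp a.1⟩ else a,
      by intro a; simp, by intro a; simp, ?_⟩
    intro a b s t hs ht hpq
    have hpq' : κ a.1 b.1 ∧ natAdj s t := by simpa [prodAdj] using hpq
    interval_cases s <;> interval_cases t <;> simp only [if_pos rfl, if_neg one_ne_zero]
    · exact hwcont _ _ hpq'.1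
    · exact hw2 _ _ hpq'.1
    · exact hw1 _ _ hpq'.1
    · exact hpq'.1
  · refine ⟨1, fun x t => if t = 0 then w x else x, by intro a; simp, by intro a; simp, ?_⟩
    intro a b s t hs ht hpq
    have hpq' : κ a b ∧ natAdj s t := by simpa [prodAdj] using hpq
    interval_cases s <;> interval_cases t <;> simp only [if_pos rfl, if_neg one_ne_zero]
    · exact hwcont _ _ hpq'.1
    · exact hw2 _ _ hpq'.1
    · exact hw1 _ _ hpq'.1
    · exact hpq'.1
end

section
/- Let (X,c_i,c_j) be a digital picture with {i,j} = {1,2}. Then, up to translation, there are only finitely many digital pictures homotopy equivalent to (X,c_i,c_j): there is a finite family F of finite subsets of ℤ² such that every finite set Y ⊊ ℤ² for which (Y,c_i,c_j) is homotopy equivalent to (X,c_i,c_j) is a translate of some member of F. In particular, the set of cardinalities of such Y is finite, so among them there is one of minimal cardinality and one of maximal cardinality. -/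
set_option maxHeartbeats 1600000
namespace S19

lemma cAdj_one_iff (p q : Pt) : cAdj 1 p q ↔
    ((-1 ≤ p.1 - q.1 ∧ p.1 - q.1 ≤ 1 ∧ -1 ≤ p.2 - q.2 ∧ p.2 - q.2 ≤ 1) ∧
      (p.1 = q.1 ∨ p.2 = q.2)) := by
  rw [cAdj, if_pos rfl]
  rcases abs_cases (p.1 - q.1) with ⟨h1, h1'⟩ | ⟨h1, h1'⟩ <;>
    rcases abs_cases (p.2 - q.2) with ⟨h2, h2'⟩ | ⟨h2, h2'⟩ <;> rw [h1, h2] <;> omega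

lemma cAdj_two_iff (p q : Pt) : cAdj 2 p q ↔
    (-1 ≤ p.1 - q.1 ∧ p.1 - q.1 ≤ 1 ∧ -1 ≤ p.2 - q.2 ∧ p.2 - q.2 ≤ 1) := by
  rw [cAdj, if_neg (by norm_num), abs_le, abs_le]
  tauto

lemma cAdj_refl (i : ℕ) (p : Pt) : cAdj i p p := by
  unfold cAdj; split <;> simp

lemma cAdj_symm {i : ℕ} {p q : Pt} (h : cAdj i p q) : cAdj i q p := by
  unfold cAdj at h ⊢
  rwa [abs_sub_comm q.1 p.1, abs_sub_comm q.2 p.2]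

lemma cAdj_one_two {p q : Pt} (h : cAdj 1 p q) : cAdj 2 p q := by
  rw [cAdj_one_iff] at h
  rw [cAdj_two_iff]
  omega

lemma cAdj_sup {j : ℕ} (hj : j = 1 ∨ j = 2) {p q : Pt} (h : cAdj j p q) :
    -1 ≤ p.1 - q.1 ∧ p.1 - q.1 ≤ 1 ∧ -1 ≤ p.2 - q.2 ∧ p.2 - q.2 ≤ 1 := by
  rcases hj with rfl | rfl
  · rw [cAdj_one_iff] at h; omega
  · rwa [cAdj_two_iff] at h

lemma cAdj_of_one {j : ℕ} (hj : j = 1 ∨ j = 2) {p q : Pt} (h : cAdj 1 p q) : cAdj j p q := by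
  rcases hj with rfl | rfl
  · exact h
  · exact cAdj_one_two h

/-- Signed crossing of the leftward ray at `x` by the step `p → q`. -/
def crossN (x p q : Pt) : ℤ :=
  if p.2 = x.2 ∧ q.2 = x.2 + 1 ∧ p.1 + q.1 ≤ 2 * x.1 then 1
  else if p.2 = x.2 + 1 ∧ q.2 = x.2 ∧ p.1 + q.1 ≤ 2 * x.1 then -1 else 0

/-- Winding number of the closed path `γ` of length `M` around `x`. -/
def Wind (x : Pt) (M : ℕ) (γ : ℕ → Pt) : ℤ :=
  ∑ t ∈ Finset.range M, crossN x (γ t) (γ (t + 1))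

lemma crossN_spec (x p q : Pt) :
    (crossN x p q = 1 ∧ p.2 = x.2 ∧ q.2 = x.2 + 1 ∧ p.1 + q.1 ≤ 2 * x.1) ∨
    (crossN x p q = -1 ∧ p.2 = x.2 + 1 ∧ q.2 = x.2 ∧ p.1 + q.1 ≤ 2 * x.1) ∨
    (crossN x p q = 0 ∧ ¬(p.2 = x.2 ∧ q.2 = x.2 + 1 ∧ p.1 + q.1 ≤ 2 * x.1) ∧
      ¬(p.2 = x.2 + 1 ∧ q.2 = x.2 ∧ p.1 + q.1 ≤ 2 * x.1)) := by
  unfold crossN; split_ifs <;> simp_all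

lemma crossN_antisymm (x p q : Pt) : crossN x p q = - crossN x q p := by
  have h1 := crossN_spec x p q
  have h2 := crossN_spec x q p
  omega

lemma ne_lin {p x : Pt} (h : p ≠ x) : ¬(p.1 = x.1 ∧ p.2 = x.2) := by
  intro hc
  exact h (Prod.ext hc.1 hc.2)

lemma cross_phi {x p q : Pt} (h2 : -1 ≤ p.2 - q.2 ∧ p.2 - q.2 ≤ 1)
    (hl : p.1 + q.1 ≤ 2 * x.1) :
    crossN x p q =
      (if x.2 + 1 ≤ q.2 then (1 : ℤ) else 0) - (if x.2 + 1 ≤ p.2 then (1 : ℤ) else 0) := by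
  unfold crossN; split_ifs <;> omega

lemma cross_zero_mixed1 {x u v w₁ w₂ : Pt}
    (hu : ¬(u.1 = x.1 ∧ u.2 = x.2)) (hv : ¬(v.1 = x.1 ∧ v.2 = x.2))
    (huv : (u.1 = v.1 ∨ u.2 = v.2) ∧ -1 ≤ u.1 - v.1 ∧ u.1 - v.1 ≤ 1)
    (hw1 : -1 ≤ w₁.1 - u.1 ∧ w₁.1 - u.1 ≤ 1)
    (hw2 : -1 ≤ w₂.1 - v.1 ∧ w₂.1 - v.1 ≤ 1)
    (hmix : x.1 + 1 ≤ u.1 ∨ x.1 + 1 ≤ v.1 ∨ x.1 + 1 ≤ w₁.1 ∨ x.1 + 1 ≤ w₂.1) :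
    crossN x u v = 0 := by
  rcases crossN_spec x u v with ⟨c, h⟩ | ⟨c, h⟩ | ⟨c, _⟩ <;> omega

lemma cross_zero_mixed2 {x u v w₁ w₂ : Pt}
    (hu : ¬(u.1 = x.1 ∧ u.2 = x.2)) (hv : ¬(v.1 = x.1 ∧ v.2 = x.2))
    (huv : -1 ≤ u.1 - v.1 ∧ u.1 - v.1 ≤ 1)
    (hw1u : -1 ≤ w₁.1 - u.1 ∧ w₁.1 - u.1 ≤ 1) (hw1v : -1 ≤ w₁.1 - v.1 ∧ w₁.1 - v.1 ≤ 1)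
    (hw2u : -1 ≤ w₂.1 - u.1 ∧ w₂.1 - u.1 ≤ 1) (hw2v : -1 ≤ w₂.1 - v.1 ∧ w₂.1 - v.1 ≤ 1)
    (hmix : x.1 + 1 ≤ u.1 ∨ x.1 + 1 ≤ v.1 ∨ x.1 + 1 ≤ w₁.1 ∨ x.1 + 1 ≤ w₂.1) :
    crossN x u v = 0 := by
  rcases crossN_spec x u v with ⟨c, h⟩ | ⟨c, h⟩ | ⟨c, _⟩ <;> omega

lemma quad_zero {j : ℕ} (hj : j = 1 ∨ j = 2) (x p q p' q' : Pt)
    (hp : p ≠ x) (hq : q ≠ x) (hp' : p' ≠ x) (hq' : q' ≠ x)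
    (e1 : cAdj j p q) (e2 : cAdj j p' q') (e3 : cAdj j p p') (e4 : cAdj j q q')
    (hdiag : j = 2 → cAdj 2 p q' ∧ cAdj 2 q p') :
    crossN x p q + crossN x q q' + crossN x q' p' + crossN x p' p = 0 := by
  have hp1 := ne_lin hp
  have hq1 := ne_lin hq
  have hp'1 := ne_lin hp'
  have hq'1 := ne_lin hq'
  by_cases hA : p.1 ≤ x.1 ∧ q.1 ≤ x.1 ∧ p'.1 ≤ x.1 ∧ q'.1 ≤ x.1
  · -- all weakly left: every crossing is counted, telescoping
    have f1 := cAdj_sup hj e1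
    have f2 := cAdj_sup hj e2
    have f3 := cAdj_sup hj e3
    have f4 := cAdj_sup hj e4
    rw [cross_phi ⟨f1.2.2.1, f1.2.2.2⟩ (by omega),
        cross_phi ⟨f4.2.2.1, f4.2.2.2⟩ (by omega),
        cross_phi (by constructor <;> omega : -1 ≤ q'.2 - p'.2 ∧ q'.2 - p'.2 ≤ 1) (by omega),
        cross_phi (by constructor <;> omega : -1 ≤ p'.2 - p.2 ∧ p'.2 - p.2 ≤ 1) (by omega)]
    ring
  · -- somebody is strictly right of x: every cross vanishes
    have hmix : x.1 + 1 ≤ p.1 ∨ x.1 + 1 ≤ q.1 ∨ x.1 + 1 ≤ p'.1 ∨ x.1 + 1 ≤ q'.1 := by omega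
    rcases hj with rfl | rfl
    · rw [cAdj_one_iff] at e1 e2 e3 e4
      rw [cross_zero_mixed1 hp1 hq1 ⟨by omega, by omega, by omega⟩
            (⟨by omega, by omega⟩ : -1 ≤ p'.1 - p.1 ∧ p'.1 - p.1 ≤ 1)
            (⟨by omega, by omega⟩ : -1 ≤ q'.1 - q.1 ∧ q'.1 - q.1 ≤ 1) (by omega),
          cross_zero_mixed1 hq1 hq'1 ⟨by omega, by omega, by omega⟩
            (⟨by omega, by omega⟩ : -1 ≤ p.1 - q.1 ∧ p.1 - q.1 ≤ 1)
            (⟨by omega, by omega⟩ : -1 ≤ p'.1 - q'.1 ∧ p'.1 - q'.1 ≤ 1) (by omega),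
          cross_zero_mixed1 hq'1 hp'1 ⟨by omega, by omega, by omega⟩
            (⟨by omega, by omega⟩ : -1 ≤ q.1 - q'.1 ∧ q.1 - q'.1 ≤ 1)
            (⟨by omega, by omega⟩ : -1 ≤ p.1 - p'.1 ∧ p.1 - p'.1 ≤ 1) (by omega),
          cross_zero_mixed1 hp'1 hp1 ⟨by omega, by omega, by omega⟩
            (⟨by omega, by omega⟩ : -1 ≤ q'.1 - p'.1 ∧ q'.1 - p'.1 ≤ 1)
            (⟨by omega, by omega⟩ : -1 ≤ q.1 - p.1 ∧ q.1 - p.1 ≤ 1) (by omega)]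
      norm_num
    · rw [cAdj_two_iff] at e1 e2 e3 e4
      obtain ⟨d1, d2⟩ := hdiag rfl
      rw [cAdj_two_iff] at d1 d2
      rw [cross_zero_mixed2 hp1 hq1 ⟨by omega, by omega⟩
            ⟨by omega, by omega⟩ ⟨by omega, by omega⟩
            ⟨by omega, by omega⟩ ⟨by omega, by omega⟩
            (w₁ := p') (w₂ := q') (by omega),
          cross_zero_mixed2 hq1 hq'1 ⟨by omega, by omega⟩
            ⟨by omega, by omega⟩ ⟨by omega, by omega⟩
            ⟨by omega, by omega⟩ ⟨by omega, by omega⟩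
            (w₁ := p) (w₂ := p') (by omega),
          cross_zero_mixed2 hq'1 hp'1 ⟨by omega, by omega⟩
            ⟨by omega, by omega⟩ ⟨by omega, by omega⟩
            ⟨by omega, by omega⟩ ⟨by omega, by omega⟩
            (w₁ := q) (w₂ := p) (by omega),
          cross_zero_mixed2 hp'1 hp1 ⟨by omega, by omega⟩
            ⟨by omega, by omega⟩ ⟨by omega, by omega⟩
            ⟨by omega, by omega⟩ ⟨by omega, by omega⟩
            (w₁ := q') (w₂ := q) (by omega)]
      norm_num

lemma wind_step (x : Pt) (M : ℕ) (γ γ' : ℕ → Pt) (h0 : γ 0 = γ M) (h0' : γ' 0 = γ' M)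
    (hsq : ∀ t < M, crossN x (γ t) (γ (t + 1)) + crossN x (γ (t + 1)) (γ' (t + 1)) +
      crossN x (γ' (t + 1)) (γ' t) + crossN x (γ' t) (γ t) = 0) :
    Wind x M γ = Wind x M γ' := by
  have key : ∀ t ∈ Finset.range M,
      crossN x (γ t) (γ (t + 1)) - crossN x (γ' t) (γ' (t + 1)) =
        (fun s => crossN x (γ s) (γ' s)) t - (fun s => crossN x (γ s) (γ' s)) (t + 1) := by
    intro t ht
    have h := hsq t (Finset.mem_range.mp ht)
    have a1 := crossN_antisymm x (γ' (t + 1)) (γ' t)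
    have a2 := crossN_antisymm x (γ' t) (γ t)
    dsimp only
    omega
  have hsub : Wind x M γ - Wind x M γ' =
      ∑ t ∈ Finset.range M,
        (crossN x (γ t) (γ (t + 1)) - crossN x (γ' t) (γ' (t + 1))) := by
    rw [Finset.sum_sub_distrib]; rfl
  rw [Finset.sum_congr rfl key, Finset.sum_range_sub'] at hsub
  have : crossN x (γ 0) (γ' 0) = crossN x (γ M) (γ' M) := by rw [h0, h0']
  omega

lemma wind_inv (x : Pt) (M : ℕ) (K : ℕ) (Λ : ℕ → ℕ → Pt)
    (hcl : ∀ k ≤ K, Λ 0 k = Λ M k)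
    (hsq : ∀ k < K, ∀ t < M,
      crossN x (Λ t k) (Λ (t + 1) k) + crossN x (Λ (t + 1) k) (Λ (t + 1) (k + 1)) +
      crossN x (Λ (t + 1) (k + 1)) (Λ t (k + 1)) + crossN x (Λ t (k + 1)) (Λ t k) = 0) :
    Wind x M (fun t => Λ t 0) = Wind x M (fun t => Λ t K) := by
  induction K with
  | zero => rfl
  | succ K ih =>
    have h1 := ih (fun k hk => hcl k (Nat.le_succ_of_le hk))
      (fun k hk t ht => hsq k (Nat.lt_succ_of_lt hk) t ht)
    rw [h1]
    exact wind_step x M _ _ (hcl K (Nat.le_succ K)) (hcl (K + 1) le_rfl)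
      (fun t ht => hsq K (Nat.lt_succ_self K) t ht)

/-- Winding invariance under a stagewise-adjacent family of closed loops avoiding `x`. -/
lemma wind_inv_adj {j : ℕ} (hj : j = 1 ∨ j = 2) (x : Pt) (M K : ℕ) (Λ : ℕ → ℕ → Pt)
    (hcl : ∀ k ≤ K, Λ 0 k = Λ M k)
    (hstage : ∀ k ≤ K, ∀ t < M, cAdj j (Λ t k) (Λ (t + 1) k))
    (htime : ∀ k < K, ∀ t ≤ M, cAdj j (Λ t k) (Λ t (k + 1)))
    (hdiag : j = 2 → ∀ k < K, ∀ t < M,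
      cAdj 2 (Λ t k) (Λ (t + 1) (k + 1)) ∧ cAdj 2 (Λ (t + 1) k) (Λ t (k + 1)))
    (havoid : ∀ k ≤ K, ∀ t ≤ M, Λ t k ≠ x) :
    Wind x M (fun t => Λ t 0) = Wind x M (fun t => Λ t K) := by
  refine wind_inv x M K Λ hcl (fun k hk t ht => ?_)
  exact quad_zero hj x (Λ t k) (Λ (t + 1) k) (Λ t (k + 1)) (Λ (t + 1) (k + 1))
    (havoid k hk.le t ht.le) (havoid k hk.le (t + 1) ht)
    (havoid (k + 1) hk t ht.le) (havoid (k + 1) hk (t + 1) ht)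
    (hstage k hk.le t ht) (hstage (k + 1) hk t ht)
    (htime k hk t ht.le) (htime k hk (t + 1) ht)
    (fun h2 => hdiag h2 k hk t ht)

lemma wind_zero_of_left (x : Pt) (M : ℕ) (γ : ℕ → Pt) (h0 : γ 0 = γ M)
    (hadj : ∀ t < M, -1 ≤ (γ t).2 - (γ (t + 1)).2 ∧ (γ t).2 - (γ (t + 1)).2 ≤ 1)
    (hleft : ∀ t ≤ M, (γ t).1 ≤ x.1) :
    Wind x M γ = 0 := by
  have key : ∀ t ∈ Finset.range M, crossN x (γ t) (γ (t + 1)) =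
      (fun s => if x.2 + 1 ≤ (γ s).2 then (1 : ℤ) else 0) (t + 1) -
      (fun s => if x.2 + 1 ≤ (γ s).2 then (1 : ℤ) else 0) t := by
    intro t ht
    have ht' := Finset.mem_range.mp ht
    have h1 := hadj t ht'
    have h2 := hleft t ht'.le
    have h3 := hleft (t + 1) ht'
    exact cross_phi (x := x) (p := γ t) (q := γ (t + 1)) ⟨h1.1, h1.2⟩ (by omega)
  unfold Wind
  rw [Finset.sum_congr rfl key,
    Finset.sum_range_sub (f := fun s => if x.2 + 1 ≤ (γ s).2 then (1 : ℤ) else 0) M,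
    ← h0]
  ring

lemma exists_cross_of_wind_ne (x : Pt) (M : ℕ) (γ : ℕ → Pt) (h : Wind x M γ ≠ 0) :
    ∃ t < M, crossN x (γ t) (γ (t + 1)) ≠ 0 := by
  by_contra hc
  push_neg at hc
  exact h (Finset.sum_eq_zero fun t ht => hc t (Finset.mem_range.mp ht))

lemma crossN_ne_facts {x p q : Pt} (h : crossN x p q ≠ 0) :
    (p.2 = x.2 ∨ p.2 = x.2 + 1) ∧ p.1 + q.1 ≤ 2 * x.1 := by
  rcases crossN_spec x p q with ⟨c, hh⟩ | ⟨c, hh⟩ | ⟨c, _⟩ <;> [omega; omega; omega]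

/-- The boundary loop of the square `[-R,R]²`, of length `8R`. -/
def sqLoop (R : ℕ) (t : ℕ) : Pt :=
  if t ≤ 2 * R then (-(R : ℤ) + t, -(R : ℤ))
  else if t ≤ 4 * R then ((R : ℤ), -(R : ℤ) + ((t : ℤ) - 2 * R))
  else if t ≤ 6 * R then ((R : ℤ) - ((t : ℤ) - 4 * R), (R : ℤ))
  else (-(R : ℤ), (R : ℤ) - ((t : ℤ) - 6 * R))

lemma sq_closed {R : ℕ} (hR : 1 ≤ R) : sqLoop R 0 = sqLoop R (8 * R) := by
  unfold sqLoop
  split_ifs <;> first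
    | rfl
    | (apply Prod.ext <;> (dsimp only; push_cast; omega))
    | (exfalso; omega)

lemma sq_adj {R : ℕ} (hR : 1 ≤ R) (t : ℕ) : cAdj 1 (sqLoop R t) (sqLoop R (t + 1)) := by
  rw [cAdj_one_iff]
  unfold sqLoop
  split_ifs <;> (dsimp only; push_cast; omega)

lemma sq_bdry {R : ℕ} (t : ℕ) :
    (sqLoop R t).1 = -(R : ℤ) ∨ (sqLoop R t).1 = R ∨
    (sqLoop R t).2 = -(R : ℤ) ∨ (sqLoop R t).2 = R := by
  unfold sqLoop
  split_ifs <;> (dsimp only; omega)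

lemma crossN_mk (x : Pt) (a b c d : ℤ) : crossN x (a, b) (c, d) =
    if b = x.2 ∧ d = x.2 + 1 ∧ a + c ≤ 2 * x.1 then 1
    else if b = x.2 + 1 ∧ d = x.2 ∧ a + c ≤ 2 * x.1 then -1 else 0 := rfl

lemma sq_wind {R : ℕ} (hR : 1 ≤ R) (x : Pt)
    (hx1 : -(R : ℤ) + 1 ≤ x.1) (hx2 : x.1 ≤ (R : ℤ) - 1)
    (hy1 : -(R : ℤ) + 1 ≤ x.2) (hy2 : x.2 ≤ (R : ℤ) - 1) :
    Wind x (8 * R) (sqLoop R) = -1 := by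
  have hnn : (0 : ℤ) ≤ 7 * (R : ℤ) - x.2 - 1 := by omega
  set t₀ : ℕ := (7 * (R : ℤ) - x.2 - 1).toNat with ht₀def
  have ht₀ : (t₀ : ℤ) = 7 * (R : ℤ) - x.2 - 1 := Int.toNat_of_nonneg hnn
  have hmem : t₀ ∈ Finset.range (8 * R) := by
    rw [Finset.mem_range]; omega
  unfold Wind
  rw [Finset.sum_eq_single_of_mem t₀ hmem ?h0]
  case h0 =>
    intro b hb hbne
    have hb' := Finset.mem_range.mp hb
    unfold sqLoop
    split_ifs <;> (rw [crossN_mk]; split_ifs <;> omega)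
  · unfold sqLoop
    split_ifs <;> (rw [crossN_mk]; split_ifs <;> omega)

/-- Clamp an integer into `[-s, s]`. -/
def clampZ (s z : ℤ) : ℤ := max (-s) (min s z)

lemma clampZ_id {s z : ℤ} (h1 : -s ≤ z) (h2 : z ≤ s) : clampZ s z = z := by
  unfold clampZ; omega

lemma clampZ_bound {s z : ℤ} (h : 0 ≤ s) : -s ≤ clampZ s z ∧ clampZ s z ≤ s := by
  unfold clampZ; omega

lemma clampZ_lip {s s' z w : ℤ} (hz : -1 ≤ z - w ∧ z - w ≤ 1)
    (hs : -1 ≤ s - s' ∧ s - s' ≤ 1) (h1 : 1 ≤ s) (h2 : 1 ≤ s') :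
    -1 ≤ clampZ s z - clampZ s' w ∧ clampZ s z - clampZ s' w ≤ 1 := by
  unfold clampZ; omega

lemma clampZ_eq {s z w : ℤ} (h : z = w) : clampZ s z = clampZ s w := by rw [h]

lemma chain_phi_linear {α : Type} (r : α → α → Prop) (φ : α → ℤ)
    (hstep : ∀ a b, r a b → -1 ≤ φ b - φ a ∧ φ b - φ a ≤ 1) :
    ∀ n (c : ℕ → α), (∀ k < n, r (c k) (c (k + 1))) →
      -(n : ℤ) ≤ φ (c n) - φ (c 0) ∧ φ (c n) - φ (c 0) ≤ n := by
  intro n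
  induction n with
  | zero => intro c _; simp
  | succ n ih =>
    intro c hr
    have h1 := ih c (fun k hk => hr k (by omega))
    have h2 := hstep _ _ (hr n (by omega))
    push_cast
    push_cast at h1
    omega

lemma chain_phi_bound {α : Type} (S : Finset α) (r : α → α → Prop) (φ : α → ℤ)
    (hstep : ∀ a b, r a b → -1 ≤ φ b - φ a ∧ φ b - φ a ≤ 1) :
    ∀ n (c : ℕ → α), (∀ k ≤ n, c k ∈ S) → (∀ k < n, r (c k) (c (k + 1))) →
      -(S.card : ℤ) ≤ φ (c n) - φ (c 0) ∧ φ (c n) - φ (c 0) ≤ S.card := by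
  intro n
  induction n using Nat.strong_induction_on with
  | _ n ih =>
    intro c hmem hr
    by_cases hn : n ≤ S.card
    · have h := chain_phi_linear r φ hstep n c hr
      omega
    · have hcard : S.card < (Finset.range (S.card + 1)).card := by simp
      obtain ⟨k, hk, l, hl, hkl, heq⟩ :=
        Finset.exists_ne_map_eq_of_card_lt_of_maps_to hcard
          (fun a ha => hmem a (by
            have := Finset.mem_range.mp ha; omega))
      rw [Finset.mem_range] at hk hl
      have main : ∀ k l : ℕ, k < l → l ≤ S.card → c k = c l →
          -(S.card : ℤ) ≤ φ (c n) - φ (c 0) ∧ φ (c n) - φ (c 0) ≤ S.card := by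
        intro k l hkl' hlS hceq
        have hln : l ≤ n := by omega
        set d := l - k with hd
        have hd1 : 1 ≤ d := by omega
        set c' : ℕ → α := fun t => if t < k then c t else c (t + d) with hc'
        have h0 : c' 0 = c 0 := by
          by_cases h : 0 < k
          · simp only [hc', if_pos h]
          · have hk0 : k = 0 := by omega
            simp only [hc', if_neg (by omega : ¬ (0 : ℕ) < k)]
            rw [show 0 + d = l by omega, ← hceq, hk0]
        have hend : c' (n - d) = c n := by
          simp only [hc', if_neg (by omega : ¬ n - d < k)]
          rw [show n - d + d = n by omega]
        have hmem' : ∀ t ≤ n - d, c' t ∈ S := by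
          intro t ht
          by_cases h : t < k
          · simp only [hc', if_pos h]; exact hmem t (by omega)
          · simp only [hc', if_neg h]; exact hmem (t + d) (by omega)
        have hr' : ∀ t < n - d, r (c' t) (c' (t + 1)) := by
          intro t ht
          by_cases h1 : t + 1 < k
          · simp only [hc', if_pos (by omega : t < k), if_pos h1]
            exact hr t (by omega)
          · by_cases h2 : t < k
            · have hk1 : t + 1 = k := by omega
              simp only [hc', if_pos h2, if_neg h1]
              rw [show t + 1 + d = l by omega, ← hceq, ← hk1]
              exact hr t (by omega)
            · simp only [hc', if_neg h2, if_neg (by omega : ¬ t + 1 < k)]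
              rw [show t + 1 + d = (t + d) + 1 by omega]
              exact hr (t + d) (by omega)
        have hres := ih (n - d) (by omega) c' hmem' hr'
        rw [h0, hend] at hres
        exact hres
      rcases Nat.lt_or_ge k l with h | h
      · exact main k l h (by omega) heq
      · exact main l k (by omega) (by omega) heq.symm


lemma wind_congr (x : Pt) (M : ℕ) (γ γ' : ℕ → Pt) (h : ∀ t ≤ M, γ t = γ' t) :
    Wind x M γ = Wind x M γ' := by
  refine Finset.sum_congr rfl fun t ht => ?_
  have ht' := Finset.mem_range.mp ht
  rw [h t ht'.le, h (t + 1) ht']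

lemma prodAdj_same_time {j : ℕ} (hj : j = 1 ∨ j = 2) {α : Type} (κ : α → α → Prop)
    {a b : α} (h : κ a b) (k : ℕ) : prodAdj j κ (a, k) (b, k) := by
  rcases hj with rfl | rfl
  · rw [prodAdj, if_pos rfl]; exact Or.inl ⟨h, rfl⟩
  · rw [prodAdj, if_neg (by norm_num)]; exact ⟨h, Or.inl rfl⟩

lemma prodAdj_same_pt {j : ℕ} (hj : j = 1 ∨ j = 2) {α : Type} (κ : α → α → Prop)
    {a : α} (h : κ a a) (k : ℕ) : prodAdj j κ (a, k) (a, k + 1) := by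
  rcases hj with rfl | rfl
  · rw [prodAdj, if_pos rfl]; exact Or.inr ⟨rfl, Or.inr (Or.inl rfl)⟩
  · rw [prodAdj, if_neg (by norm_num)]; exact ⟨h, Or.inr (Or.inl rfl)⟩

lemma prodAdj_diag {α : Type} (κ : α → α → Prop)
    {a b : α} (h : κ a b) (k : ℕ) : prodAdj 2 κ (a, k) (b, k + 1) := by
  rw [prodAdj, if_neg (by norm_num)]; exact ⟨h, Or.inr (Or.inl rfl)⟩

lemma subAdj_refl (j : ℕ) (Z : Set Pt) (a : Z) : subAdj j Z a a := cAdj_refl j a.1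

/-- clamping the first coordinates at a common level preserves adjacency -/
lemma clamp_fst_stage {j : ℕ} (hj : j = 1 ∨ j = 2) {p q : Pt} (h : cAdj j p q)
    {s : ℤ} (h1 : 1 ≤ s) :
    cAdj j ((clampZ s p.1, p.2) : Pt) ((clampZ s q.1, q.2) : Pt) := by
  rcases hj with rfl | rfl
  · rw [cAdj_one_iff] at h ⊢
    obtain ⟨hb, hor⟩ := h
    refine ⟨?_, ?_⟩
    · have := clampZ_lip (s := s) (s' := s) ⟨hb.1, hb.2.1⟩ (by omega) h1 h1
      dsimp only
      omega
    · rcases hor with h' | h'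
      · exact Or.inl (by dsimp only; rw [h'])
      · exact Or.inr (by dsimp only; exact h')
  · rw [cAdj_two_iff] at h ⊢
    have := clampZ_lip (s := s) (s' := s) ⟨h.1, h.2.1⟩ (by omega) h1 h1
    dsimp only
    omega

lemma clamp_fst_time {j : ℕ} (hj : j = 1 ∨ j = 2) (p : Pt)
    {s s' : ℤ} (hss : -1 ≤ s - s' ∧ s - s' ≤ 1) (h1 : 1 ≤ s) (h2 : 1 ≤ s') :
    cAdj j ((clampZ s p.1, p.2) : Pt) ((clampZ s' p.1, p.2) : Pt) := by
  have hl := clampZ_lip (z := p.1) (w := p.1) ⟨by omega, by omega⟩ hss h1 h2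
  rcases hj with rfl | rfl
  · rw [cAdj_one_iff]
    exact ⟨by dsimp only; omega, Or.inr rfl⟩
  · rw [cAdj_two_iff]
    dsimp only
    omega

lemma clamp_fst_diag {p q : Pt} (h : cAdj 2 p q)
    {s s' : ℤ} (hss : -1 ≤ s - s' ∧ s - s' ≤ 1) (h1 : 1 ≤ s) (h2 : 1 ≤ s') :
    cAdj 2 ((clampZ s p.1, p.2) : Pt) ((clampZ s' q.1, q.2) : Pt) := by
  rw [cAdj_two_iff] at h ⊢
  have := clampZ_lip ⟨h.1, h.2.1⟩ hss h1 h2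
  dsimp only
  omega

lemma clamp_snd_stage {j : ℕ} (hj : j = 1 ∨ j = 2) {p q : Pt} (h : cAdj j p q)
    {s : ℤ} (h1 : 1 ≤ s) :
    cAdj j ((p.1, clampZ s p.2) : Pt) ((q.1, clampZ s q.2) : Pt) := by
  rcases hj with rfl | rfl
  · rw [cAdj_one_iff] at h ⊢
    obtain ⟨hb, hor⟩ := h
    refine ⟨?_, ?_⟩
    · have := clampZ_lip (s := s) (s' := s) ⟨hb.2.2.1, hb.2.2.2⟩ (by omega) h1 h1
      dsimp only
      omega
    · rcases hor with h' | h'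
      · exact Or.inl (by dsimp only; exact h')
      · exact Or.inr (by dsimp only; rw [h'])
  · rw [cAdj_two_iff] at h ⊢
    have := clampZ_lip (s := s) (s' := s) ⟨h.2.2.1, h.2.2.2⟩ (by omega) h1 h1
    dsimp only
    omega

lemma clamp_snd_time {j : ℕ} (hj : j = 1 ∨ j = 2) (p : Pt)
    {s s' : ℤ} (hss : -1 ≤ s - s' ∧ s - s' ≤ 1) (h1 : 1 ≤ s) (h2 : 1 ≤ s') :
    cAdj j ((p.1, clampZ s p.2) : Pt) ((p.1, clampZ s' p.2) : Pt) := by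
  have hl := clampZ_lip (z := p.2) (w := p.2) ⟨by omega, by omega⟩ hss h1 h2
  rcases hj with rfl | rfl
  · rw [cAdj_one_iff]
    exact ⟨by dsimp only; omega, Or.inl rfl⟩
  · rw [cAdj_two_iff]
    dsimp only
    omega

lemma clamp_snd_diag {p q : Pt} (h : cAdj 2 p q)
    {s s' : ℤ} (hss : -1 ≤ s - s' ∧ s - s' ≤ 1) (h1 : 1 ≤ s) (h2 : 1 ≤ s') :
    cAdj 2 ((p.1, clampZ s p.2) : Pt) ((q.1, clampZ s' q.2) : Pt) := by
  rw [cAdj_two_iff] at h ⊢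
  have := clampZ_lip ⟨h.2.2.1, h.2.2.2⟩ hss h1 h2
  dsimp only
  omega

lemma htpyEquiv_refl (i : ℕ) {α : Type} (κ : α → α → Prop) (hrefl : ∀ a, κ a a) :
    HtpyEquiv i κ κ := by
  refine ⟨id, id, fun a b h => h, fun a b h => h, ?_, ?_⟩ <;>
  · refine ⟨0, fun a _ => a, fun a => rfl, fun a => rfl, ?_⟩
    intro a b s t _ _ hadj
    unfold prodAdj at hadj
    split_ifs at hadj with h
    · rcases hadj with ⟨h1, _⟩ | ⟨h1, _⟩
      · exact h1
      · have hab : a = b := h1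
        rw [hab]; exact hrefl b
    · exact hadj.1


/-- Key bound: if the complement pictures are `j`-homotopy equivalent then `Y`
is contained in a box of size depending only on `X`. -/
lemma main_bound {j : ℕ} (hj : j = 1 ∨ j = 2) (X : Set Pt) (hX : X.Finite) :
    ∃ N : ℤ, 0 ≤ N ∧ ∀ Y : Set Pt, Y.Finite →
      HtpyEquiv j (subAdj j Xᶜ) (subAdj j Yᶜ) →
      ∃ v : Pt, ∀ y ∈ Y,
        -N ≤ y.1 - v.1 ∧ y.1 - v.1 ≤ N ∧ -N ≤ y.2 - v.2 ∧ y.2 - v.2 ≤ N := by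
  classical
  -- a box around X
  set Dn : ℕ := hX.toFinset.sup (fun p => max p.1.natAbs p.2.natAbs) with hDn
  set D : ℤ := (Dn : ℤ) with hDdef
  have hD0 : 0 ≤ D := by positivity
  have hD : ∀ p ∈ X, -D ≤ p.1 ∧ p.1 ≤ D ∧ -D ≤ p.2 ∧ p.2 ≤ D := by
    intro p hp
    have hpF : p ∈ hX.toFinset := hX.mem_toFinset.mpr hp
    have hle : max p.1.natAbs p.2.natAbs ≤ Dn := by
      rw [hDn]; exact Finset.le_sup (f := fun p : Pt => max p.1.natAbs p.2.natAbs) hpF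
    omega
  have hD' : ∀ a b : ℤ, ((a, b) : Pt) ∈ X → -D ≤ a ∧ a ≤ D ∧ -D ≤ b ∧ b ≤ D :=
    fun a b h => hD (a, b) h
  -- membership of clamped points in the complement
  have memX1 : ∀ p : Pt, p ∈ Xᶜ → ∀ s : ℤ, D + 1 ≤ s →
      ((clampZ s p.1, p.2) : Pt) ∈ Xᶜ := by
    intro p hp s hs
    by_cases hc : -s ≤ p.1 ∧ p.1 ≤ s
    · rw [clampZ_id hc.1 hc.2, Prod.mk.eta]; exact hp
    · intro hmem
      have hb := hD' _ _ hmem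
      unfold clampZ at hb
      omega
  have memX2 : ∀ p : Pt, p ∈ Xᶜ → ∀ s : ℤ, D + 1 ≤ s →
      ((p.1, clampZ s p.2) : Pt) ∈ Xᶜ := by
    intro p hp s hs
    by_cases hc : -s ≤ p.2 ∧ p.2 ≤ s
    · rw [clampZ_id hc.1 hc.2, Prod.mk.eta]; exact hp
    · intro hmem
      have hb := hD' _ _ hmem
      unfold clampZ at hb
      omega
  -- the finite "core" of the complement
  set SetS : Set ↥(Xᶜ) :=
    {a : ↥(Xᶜ) | -(D + 1) ≤ a.1.1 ∧ a.1.1 ≤ D + 1 ∧ -(D + 1) ≤ a.1.2 ∧ a.1.2 ≤ D + 1}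
    with hSetS
  have hSfin : SetS.Finite := by
    have hbox : (Set.Icc ((-(D + 1), -(D + 1)) : Pt) ((D + 1, D + 1) : Pt)).Finite :=
      Set.finite_Icc _ _
    refine Set.Finite.subset (hbox.preimage
      (Function.Injective.injOn Subtype.val_injective)) ?_
    intro a ha
    simp only [hSetS, Set.mem_setOf_eq] at ha
    simp only [Set.mem_preimage, Set.mem_Icc, Prod.le_def]
    exact ⟨⟨ha.1, ha.2.2.1⟩, ⟨ha.2.1, ha.2.2.2⟩⟩
  set S : Finset ↥(Xᶜ) := hSfin.toFinset with hSdef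
  set B : ℤ := (S.card : ℤ) with hB
  have hB0 : 0 ≤ B := Int.natCast_nonneg _
  refine ⟨B + 2, by omega, ?_⟩
  intro Y hY hEq
  obtain ⟨f, g, hf, hg, _, hfg⟩ := hEq
  obtain ⟨m, H, H0, Hm, Hc⟩ := hfg
  rcases Set.eq_empty_or_nonempty Y with hYe | hYne
  · exact ⟨(0, 0), by simp [hYe]⟩
  -- a radius for the square loop around Y
  set Rn : ℕ := (hY.toFinset.sup (fun p => max p.1.natAbs p.2.natAbs)) + 1 with hRn
  have hR1 : 1 ≤ Rn := by omega
  have hYR : ∀ y ∈ Y, -(Rn : ℤ) + 1 ≤ y.1 ∧ y.1 ≤ (Rn : ℤ) - 1 ∧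
      -(Rn : ℤ) + 1 ≤ y.2 ∧ y.2 ≤ (Rn : ℤ) - 1 := by
    intro y hy
    have hpF : y ∈ hY.toFinset := hY.mem_toFinset.mpr hy
    have hle : max y.1.natAbs y.2.natAbs ≤ Rn - 1 := by
      rw [hRn]
      exact Nat.le_of_lt_succ (Nat.lt_succ_of_le
        (Finset.le_sup (f := fun p : Pt => max p.1.natAbs p.2.natAbs) hpF))
    omega
  set M : ℕ := 8 * Rn with hM
  set σ : ℕ → Pt := sqLoop Rn with hσ
  have hσY : ∀ t, σ t ∈ Yᶜ := by
    intro t hmem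
    have h1 := hYR _ hmem
    have h2 := sq_bdry (R := Rn) (t := t)
    rw [← hσ] at h2
    omega
  set σh : ℕ → ↥(Yᶜ) := fun t => ⟨σ t, hσY t⟩ with hσh
  have σadj : ∀ t, cAdj j (σ t) (σ (t + 1)) := fun t => cAdj_of_one hj (sq_adj hR1 t)
  have σcl : σ 0 = σ M := sq_closed hR1
  have σhcl : σh 0 = σh M := Subtype.ext σcl
  -- the transported loop in the complement of X
  set τ : ℕ → ↥(Xᶜ) := fun t => g (σh t) with hτ
  have τadj : ∀ t, cAdj j (τ t).1 (τ (t + 1)).1 := fun t => hg (σh t) (σh (t + 1)) (σadj t)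
  have τcl : τ 0 = τ M := congrArg g σhcl
  -- a bound for the loop τ
  set Tn : ℕ := (Finset.range (M + 1)).sup (fun t => max (τ t).1.1.natAbs (τ t).1.2.natAbs)
    with hTn
  have hT : ∀ t ≤ M, -(Tn : ℤ) ≤ (τ t).1.1 ∧ (τ t).1.1 ≤ (Tn : ℤ) ∧
      -(Tn : ℤ) ≤ (τ t).1.2 ∧ (τ t).1.2 ≤ (Tn : ℤ) := by
    intro t ht
    have hle : max (τ t).1.1.natAbs (τ t).1.2.natAbs ≤ Tn := by
      rw [hTn]
      exact Finset.le_sup (f := fun t => max (τ t).1.1.natAbs (τ t).1.2.natAbs)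
        (Finset.mem_range.mpr (Nat.lt_succ_of_le ht))
    omega
  -- clamping levels
  set lev : ℕ → ℤ := fun k => max (D + 1) ((Tn : ℤ) - k) with hlev
  have hlev1 : ∀ k, 1 ≤ lev k := fun k => le_trans (by omega) (le_max_left _ _)
  have hlevD : ∀ k, D + 1 ≤ lev k := fun k => le_max_left _ _
  have hlev_step : ∀ k, -1 ≤ lev k - lev (k + 1) ∧ lev k - lev (k + 1) ≤ 1 := by
    intro k
    simp only [hlev]
    push_cast
    omega
  set K : ℕ := Tn with hK
  have hlevK : lev K = D + 1 := by
    simp only [hlev, hK]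
    omega
  have hlev0 : (Tn : ℤ) ≤ lev 0 := by
    simp only [hlev]
    push_cast
    omega
  -- the two clamped families in the complement of X
  set c₁ : ℕ → ℕ → ↥(Xᶜ) := fun t k =>
    ⟨(clampZ (lev k) (τ t).1.1, (τ t).1.2), memX1 _ (τ t).2 _ (hlevD k)⟩ with hc₁
  set c₂ : ℕ → ℕ → ↥(Xᶜ) := fun t k =>
    ⟨((c₁ t K).1.1, clampZ (lev k) (c₁ t K).1.2), memX2 _ (c₁ t K).2 _ (hlevD k)⟩ with hc₂
  have c₁cl : ∀ k, c₁ 0 k = c₁ M k := by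
    intro k
    apply Subtype.ext
    simp only [hc₁, τcl]
  have c₂cl : ∀ k, c₂ 0 k = c₂ M k := by
    intro k
    apply Subtype.ext
    simp only [hc₂, hc₁, τcl]
  have c₁adj : ∀ t k, cAdj j (c₁ t k).1 (c₁ (t + 1) k).1 :=
    fun t k => clamp_fst_stage hj (τadj t) (hlev1 k)
  have c₂adj : ∀ t k, cAdj j (c₂ t k).1 (c₂ (t + 1) k).1 :=
    fun t k => clamp_snd_stage hj (c₁adj t K) (hlev1 k)
  -- the three stage families of loops in the complement of Y
  set Λ₁ : ℕ → ℕ → Pt := fun t k => (H (σh t) k).1 with hΛ₁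
  set Λ₂ : ℕ → ℕ → Pt := fun t k => (f (c₁ t k)).1 with hΛ₂
  set Λ₃ : ℕ → ℕ → Pt := fun t k => (f (c₂ t k)).1 with hΛ₃
  set lf : ℕ → Pt := fun t => Λ₃ t K with hlf
  -- membership of all stages in the complement of Y
  have hΛ₁Y : ∀ t k, Λ₁ t k ∈ Yᶜ := fun t k => (H (σh t) k).2
  have hΛ₂Y : ∀ t k, Λ₂ t k ∈ Yᶜ := fun t k => (f (c₁ t k)).2
  have hΛ₃Y : ∀ t k, Λ₃ t k ∈ Yᶜ := fun t k => (f (c₂ t k)).2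
  -- border identifications
  have e10 : ∀ t, Λ₁ t 0 = (f (τ t)).1 := fun t => congrArg Subtype.val (H0 (σh t))
  have e1m : ∀ t, Λ₁ t m = σ t := fun t => congrArg Subtype.val (Hm (σh t))
  have e20 : ∀ t ≤ M, c₁ t 0 = τ t := by
    intro t ht
    apply Subtype.ext
    have hb := hT t ht
    simp only [hc₁]
    rw [clampZ_id (by omega) (by omega), Prod.mk.eta]
  have e30 : ∀ t ≤ M, c₂ t 0 = c₁ t K := by
    intro t ht
    apply Subtype.ext
    have hb := hT t ht
    have h0 := hlev0
    simp only [hc₂, hc₁]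
    rw [clampZ_id (show -(lev 0) ≤ (τ t).1.2 by omega) (show (τ t).1.2 ≤ lev 0 by omega)]
  -- chain bound set-up
  set φ₁ : ↥(Xᶜ) → ℤ := fun a => (f a).1.1 with hφ₁
  set φ₂ : ↥(Xᶜ) → ℤ := fun a => (f a).1.2 with hφ₂
  have hstep1 : ∀ a b : ↥(Xᶜ), subAdj j Xᶜ a b → -1 ≤ φ₁ b - φ₁ a ∧ φ₁ b - φ₁ a ≤ 1 := by
    intro a b hab
    have := cAdj_sup hj (hf a b hab)
    simp only [hφ₁]
    omega
  have hstep2 : ∀ a b : ↥(Xᶜ), subAdj j Xᶜ a b → -1 ≤ φ₂ b - φ₂ a ∧ φ₂ b - φ₂ a ≤ 1 := by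
    intro a b hab
    have := cAdj_sup hj (hf a b hab)
    simp only [hφ₂]
    omega
  have hmemS : ∀ t, c₂ t K ∈ S := by
    intro t
    have hb1 := clampZ_bound (s := lev K) (z := (τ t).1.1) (by have := hlev1 K; omega)
    have hb2 := clampZ_bound (s := lev K) (z := (τ t).1.2) (by have := hlev1 K; omega)
    have hK' := hlevK
    rw [hSdef, Set.Finite.mem_toFinset]
    simp only [hSetS, Set.mem_setOf_eq, hc₂, hc₁]
    omega
  have c₂KsubAdj : ∀ t, subAdj j Xᶜ (c₂ t K) (c₂ (t + 1) K) := fun t => c₂adj t K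
  have bnd1 : ∀ t ≤ M, -B ≤ (lf t).1 - (lf 0).1 ∧ (lf t).1 - (lf 0).1 ≤ B := by
    intro t _
    have := chain_phi_bound S (subAdj j Xᶜ) φ₁ hstep1 t (fun k => c₂ k K)
      (fun k _ => hmemS k) (fun k _ => c₂KsubAdj k)
    simp only [hφ₁] at this
    exact this
  have bnd2 : ∀ t ≤ M, -B ≤ (lf t).2 - (lf 0).2 ∧ (lf t).2 - (lf 0).2 ≤ B := by
    intro t _
    have := chain_phi_bound S (subAdj j Xᶜ) φ₂ hstep2 t (fun k => c₂ k K)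
      (fun k _ => hmemS k) (fun k _ => c₂KsubAdj k)
    simp only [hφ₂] at this
    exact this
  have lfadj : ∀ t, cAdj j (lf t) (lf (t + 1)) := fun t => hf _ _ (c₂adj t K)
  have lfcl : lf 0 = lf M := by
    simp only [hlf, hΛ₃, c₂cl K]
  -- now fix y ∈ Y and chase the winding number
  refine ⟨lf 0, ?_⟩
  intro y hy
  have hyb := hYR y hy
  have avY : ∀ (q : ↥(Yᶜ)), q.1 ≠ y := by
    intro q hq
    exact q.2 (by rw [hq]; exact hy)
  have W1 : Wind y M (fun t => Λ₁ t 0) = Wind y M (fun t => Λ₁ t m) := by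
    refine wind_inv_adj hj y M m Λ₁ (fun k _ => ?_) (fun k hk t _ => ?_)
      (fun k hk t _ => ?_) (fun h2 => ?_) (fun k _ t _ => avY _)
    · simp only [hΛ₁, σhcl]
    · exact Hc (σh t) (σh (t + 1)) k k hk hk (prodAdj_same_time hj (subAdj j Yᶜ) (a := σh t) (b := σh (t + 1)) (σadj t) k)
    · exact Hc (σh t) (σh t) k (k + 1) (by omega) (by omega)
        (prodAdj_same_pt hj (subAdj j Yᶜ) (subAdj_refl j _ (σh t)) k)
    · subst h2
      intro k hk t _
      exact ⟨Hc (σh t) (σh (t + 1)) k (k + 1) (by omega) (by omega)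
          (prodAdj_diag (subAdj 2 Yᶜ) (a := σh t) (b := σh (t + 1)) (σadj t) k),
        Hc (σh (t + 1)) (σh t) k (k + 1) (by omega) (by omega)
          (prodAdj_diag (subAdj 2 Yᶜ) (a := σh (t + 1)) (b := σh t) (cAdj_symm (σadj t)) k)⟩
  have W2 : Wind y M (fun t => Λ₂ t 0) = Wind y M (fun t => Λ₂ t K) := by
    refine wind_inv_adj hj y M K Λ₂ (fun k _ => ?_) (fun k _ t _ => ?_)
      (fun k _ t _ => ?_) (fun h2 => ?_) (fun k _ t _ => avY _)
    · simp only [hΛ₂, c₁cl k]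
    · exact hf _ _ (c₁adj t k)
    · exact hf _ _ (clamp_fst_time hj (τ t).1 (hlev_step k) (hlev1 k) (hlev1 (k + 1)))
    · subst h2
      intro k _ t _
      exact ⟨hf _ _ (clamp_fst_diag (τadj t) (hlev_step k) (hlev1 k) (hlev1 (k + 1))),
        hf _ _ (clamp_fst_diag (cAdj_symm (τadj t)) (hlev_step k) (hlev1 k) (hlev1 (k + 1)))⟩
  have W3 : Wind y M (fun t => Λ₃ t 0) = Wind y M (fun t => Λ₃ t K) := by
    refine wind_inv_adj hj y M K Λ₃ (fun k _ => ?_) (fun k _ t _ => ?_)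
      (fun k _ t _ => ?_) (fun h2 => ?_) (fun k _ t _ => avY _)
    · simp only [hΛ₃, c₂cl k]
    · exact hf _ _ (c₂adj t k)
    · exact hf _ _ (clamp_snd_time hj (c₁ t K).1 (hlev_step k) (hlev1 k) (hlev1 (k + 1)))
    · subst h2
      intro k _ t _
      exact ⟨hf _ _ (clamp_snd_diag (c₁adj t K) (hlev_step k) (hlev1 k) (hlev1 (k + 1))),
        hf _ _ (clamp_snd_diag (cAdj_symm (c₁adj t K)) (hlev_step k) (hlev1 k)
          (hlev1 (k + 1)))⟩
  have link21 : Wind y M (fun t => Λ₂ t 0) = Wind y M (fun t => Λ₁ t 0) := by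
    refine wind_congr _ _ _ _ (fun t ht => ?_)
    simp only [hΛ₂]
    rw [e20 t ht, ← e10 t]
  have link32 : Wind y M (fun t => Λ₃ t 0) = Wind y M (fun t => Λ₂ t K) := by
    refine wind_congr _ _ _ _ (fun t ht => ?_)
    simp only [hΛ₃, hΛ₂]
    rw [e30 t ht]
  have Wσ : Wind y M σ = -1 := by
    have := sq_wind hR1 y (by omega) (by omega) (by omega) (by omega)
    rw [← hσ, ← hM] at this
    exact this
  have W1σ : Wind y M (fun t => Λ₁ t m) = Wind y M σ :=
    wind_congr _ _ _ _ (fun t _ => e1m t)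
  have Wfin : Wind y M lf = -1 := by
    have : Wind y M lf = Wind y M (fun t => Λ₃ t K) := rfl
    rw [this, ← W3, link32, ← W2, link21, W1, W1σ, Wσ]
  -- extraction of the coordinate bounds
  have hne : Wind y M lf ≠ 0 := by rw [Wfin]; norm_num
  obtain ⟨ts, hts, hcr⟩ := exists_cross_of_wind_ne y M lf hne
  have hfacts := crossN_ne_facts hcr
  have hub : ∃ t' ≤ M, y.1 < (lf t').1 := by
    by_contra hcon
    push_neg at hcon
    have h0 := wind_zero_of_left y M lf lfcl
      (fun t _ => by have := cAdj_sup hj (lfadj t); omega) hcon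
    omega
  obtain ⟨t', ht', hubt⟩ := hub
  have b1 := bnd1 ts (by omega)
  have b2 := bnd1 (ts + 1) (by omega)
  have b3 := bnd1 t' ht'
  have b4 := bnd2 ts (by omega)
  refine ⟨?_, ?_, ?_, ?_⟩ <;> omega

end S19

/-- up to translation there are only finitely many digital pictures
homotopy equivalent to `(X,c_i,c_j)`; in particular there are homotopy equivalent
pictures of minimal and of maximal cardinality. -/
theorem stmt19 (i j : ℕ) (hij : (i = 1 ∧ j = 2) ∨ (i = 2 ∧ j = 1))
    (X : Set Pt) (hX : X.Finite) :
    (∃ F : Set (Set Pt), F.Finite ∧ (∀ A ∈ F, A.Finite) ∧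
      ∀ Y : Set Pt, Y.Finite → PicHtpyEquiv i j X Y →
        ∃ A ∈ F, ∃ v : Pt, Y = (fun a => a + v) '' A) ∧
    (∃ Ymin : Set Pt, Ymin.Finite ∧ PicHtpyEquiv i j X Ymin ∧
      ∀ Y : Set Pt, Y.Finite → PicHtpyEquiv i j X Y → Ymin.ncard ≤ Y.ncard) ∧
    (∃ Ymax : Set Pt, Ymax.Finite ∧ PicHtpyEquiv i j X Ymax ∧
      ∀ Y : Set Pt, Y.Finite → PicHtpyEquiv i j X Y → Y.ncard ≤ Ymax.ncard) := by
  classical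
  have hj : j = 1 ∨ j = 2 := by rcases hij with ⟨_, h⟩ | ⟨_, h⟩ <;> omega
  obtain ⟨N, hN0, hmain⟩ := S19.main_bound hj X hX
  set box : Set Pt := {p : Pt | 0 ≤ p.1 ∧ p.1 ≤ 2 * N ∧ 0 ≤ p.2 ∧ p.2 ≤ 2 * N} with hbox
  have hboxfin : box.Finite := by
    refine Set.Finite.subset (Set.finite_Icc ((0 : ℤ), (0 : ℤ)) ((2 * N, 2 * N) : Pt)) ?_
    intro p hp
    simp only [hbox, Set.mem_setOf_eq] at hp
    simp only [Set.mem_Icc, Prod.le_def]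
    exact ⟨⟨hp.1, hp.2.2.1⟩, ⟨hp.2.1, hp.2.2.2⟩⟩
  have part1 : ∀ Y : Set Pt, Y.Finite → PicHtpyEquiv i j X Y →
      ∃ A, A ⊆ box ∧ ∃ v : Pt, Y = (fun a => a + v) '' A := by
    intro Y hYf hYe
    obtain ⟨v, hv⟩ := hmain Y hYf hYe.2
    refine ⟨(fun a => a + (-(v - ((N, N) : Pt)))) '' Y, ?_, v - ((N, N) : Pt), ?_⟩
    · rintro a ⟨y, hy, rfl⟩
      have hb := hv y hy
      have h1 : (y + -(v - ((N, N) : Pt))).1 = y.1 - (v.1 - N) := by simp; ring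
      have h2 : (y + -(v - ((N, N) : Pt))).2 = y.2 - (v.2 - N) := by simp; ring
      simp only [hbox, Set.mem_setOf_eq, h1, h2]
      omega
    · rw [Set.image_image]
      have hid : (fun x : Pt => x + -(v - ((N, N) : Pt)) + (v - ((N, N) : Pt))) =
          fun x : Pt => x := by
        funext x
        exact neg_add_cancel_right x _
      rw [hid]
      exact (Set.image_id Y).symm
  have hrefl : PicHtpyEquiv i j X X :=
    ⟨S19.htpyEquiv_refl i _ (fun a => S19.cAdj_refl i a.1),
     S19.htpyEquiv_refl j _ (fun a => S19.cAdj_refl j a.1)⟩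
  set Q : Set ℕ := {n | ∃ Y : Set Pt, Y.Finite ∧ PicHtpyEquiv i j X Y ∧ Y.ncard = n} with hQ
  have hQne : X.ncard ∈ Q := ⟨X, hX, hrefl, rfl⟩
  have hQbdd : ∀ n ∈ Q, n ≤ box.ncard := by
    rintro n ⟨Y, hYf, hYe, rfl⟩
    obtain ⟨A, hAbox, v, rfl⟩ := part1 Y hYf hYe
    rw [Set.ncard_image_of_injective _ (add_left_injective v)]
    exact Set.ncard_le_ncard hAbox hboxfin
  have hbddQ : BddAbove Q := ⟨box.ncard, fun n hn => hQbdd n hn⟩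
  refine ⟨⟨{A : Set Pt | A ⊆ box}, Set.Finite.finite_subsets hboxfin,
      fun A hA => hboxfin.subset hA, fun Y hYf hYe => ?_⟩, ?_, ?_⟩
  · obtain ⟨A, hAbox, v, hv⟩ := part1 Y hYf hYe
    exact ⟨A, hAbox, v, hv⟩
  · obtain ⟨Ymin, hYminf, hYmine, hYminc⟩ := Nat.sInf_mem (⟨_, hQne⟩ : Q.Nonempty)
    refine ⟨Ymin, hYminf, hYmine, fun Y hYf hYe => ?_⟩
    rw [hYminc]
    exact Nat.sInf_le ⟨Y, hYf, hYe, rfl⟩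
  · obtain ⟨Ymax, hYmaxf, hYmaxe, hYmaxc⟩ := Nat.sSup_mem (⟨_, hQne⟩ : Q.Nonempty) hbddQ
    refine ⟨Ymax, hYmaxf, hYmaxe, fun Y hYf hYe => ?_⟩
    rw [hYmaxc]
    exact le_csSup hbddQ ⟨Y, hYf, hYe, rfl⟩
end
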